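/- arXiv:1710.04902 — 2 statements merged into one kernel-verified Lean document; each statement's English description precedes it below -/
import Mathlib

section
/- Let f be an increasing homeomorphism from ℝ onto an interval (a,b) with a > −∞ and b < +∞. For t ∈ ℝ let F_t(x) = f(x)+t. Then there exists a subset N ⊂ ℝ of finite Lebesgue measure such that for all t ∉ N, the map F_t has a unique fixed point in ℝ. -/
open Set Function Filter MeasureTheory

/-- An orientation-preserving homeomorphism of `ℝ` commuting with `x ↦ x + 1`,
i.e. a lift of an orientation-preserving circle homeomorphism. -/
structure HomeoZR : Type where
  toFun : ℝ → ℝ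
  invFun : ℝ → ℝ
  left_inv : Function.LeftInverse invFun toFun
  right_inv : Function.RightInverse invFun toFun
  strictMono : StrictMono toFun
  map_add_one : ∀ x, toFun (x + 1) = toFun x + 1

namespace HomeoZR

/-- The identity. -/
protected def id : HomeoZR :=
  ⟨_root_.id, _root_.id, fun _ => rfl, fun _ => rfl, strictMono_id, fun _ => rfl⟩

/-- Composition `f ∘ g`. -/
protected def comp (f g : HomeoZR) : HomeoZR where
  toFun := f.toFun ∘ g.toFun
  invFun := g.invFun ∘ f.invFun
  left_inv := fun x => by
    show g.invFun (f.invFun (f.toFun (g.toFun x))) = x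
    rw [f.left_inv, g.left_inv]
  right_inv := fun x => by
    show f.toFun (g.toFun (g.invFun (f.invFun x))) = x
    rw [g.right_inv, f.right_inv]
  strictMono := f.strictMono.comp g.strictMono
  map_add_one := fun x => by
    show f.toFun (g.toFun (x + 1)) = f.toFun (g.toFun x) + 1
    rw [g.map_add_one, f.map_add_one]

/-- Inverse. -/
protected def symm (f : HomeoZR) : HomeoZR where
  toFun := f.invFun
  invFun := f.toFun
  left_inv := f.right_inv
  right_inv := f.left_inv
  strictMono := by
    intro x y hxy
    rcases lt_trichotomy (f.invFun x) (f.invFun y) with h | h | h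
    · exact h
    · exact absurd (by rw [← f.right_inv x, ← f.right_inv y, h]) (ne_of_lt hxy)
    · have h2 := f.strictMono h
      rw [f.right_inv, f.right_inv] at h2
      exact absurd h2 (lt_asymm hxy)
  map_add_one := fun x => by
    have h1 : f.invFun (f.toFun (f.invFun x + 1)) = f.invFun (x + 1) := by
      rw [f.map_add_one, f.right_inv]
    rw [f.left_inv] at h1
    exact h1.symm

/-- The associated monotone degree-one lift. -/
def toLift (f : HomeoZR) : CircleDeg1Lift :=
  ⟨⟨f.toFun, f.strictMono.monotone⟩, f.map_add_one⟩

/-- The translation number `rot̃(f)`. -/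
noncomputable def transNum (f : HomeoZR) : ℝ :=
  f.toLift.translationNumber

/-- The canonical lift of the underlying circle homeomorphism: the lift whose
translation number lies in `[0,1)`, as a plain function. -/
noncomputable def canon (f : HomeoZR) : ℝ → ℝ :=
  fun x => f.toFun x - (⌊f.transNum⌋ : ℝ)

/-- The periodic points of the underlying circle homeomorphism, as a
`ℤ`-periodic subset of `ℝ`. -/
def Per (f : HomeoZR) : Set ℝ :=
  {x | ∃ n : ℕ, 0 < n ∧ ∃ m : ℤ, f.toFun^[n] x = x + m}

/-- The fixed points of the underlying circle homeomorphism, as a subset of `ℝ`. -/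
def FixS (f : HomeoZR) : Set ℝ :=
  {x | ∃ m : ℤ, f.toFun x = x + m}

/-- `q(f)`: the minimal period of the underlying circle homeomorphism. -/
noncomputable def q (f : HomeoZR) : ℕ :=
  sInf {n : ℕ | 0 < n ∧ ∃ x : ℝ, ∃ m : ℤ, f.toFun^[n] x = x + m}

/-- `p(f)`: the least `p ≥ 0` with `rot(f) = p / q(f)` mod `ℤ`. -/
noncomputable def p (f : HomeoZR) : ℕ :=
  sInf {p : ℕ | ∃ m : ℤ, f.transNum = (p : ℝ) / (f.q : ℝ) + (m : ℝ)}

/-- Natural powers. -/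
protected def npow (f : HomeoZR) : ℕ → HomeoZR
  | 0 => HomeoZR.id
  | n + 1 => (f.npow n).comp f

/-- Integer powers. -/
protected def zpow (f : HomeoZR) (k : ℤ) : HomeoZR :=
  if 0 ≤ k then f.npow k.toNat else f.symm.npow (-k).toNat

end HomeoZR

/-- `f` has rational rotation number. -/
def RatRot (f : HomeoZR) : Prop := ∃ r : ℚ, f.transNum = (r : ℝ)

/-- `F` is a positive one-parameter family (one-parameter group) commuting with `f`:
for `t ≠ 0` the fixed set of `F t` is the frontier of `Per f`, and for `t > 0` the
canonical lift of `F t` moves every point off the frontier strictly to the right. -/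
def PosFamily (f : HomeoZR) (F : ℝ → HomeoZR) : Prop :=
  (∀ s t, (F (s + t)).toFun = (F s).toFun ∘ (F t).toFun) ∧
  (∀ t, (F t).toFun ∘ f.toFun = f.toFun ∘ (F t).toFun) ∧
  (∀ t, t ≠ 0 → (F t).FixS = frontier f.Per) ∧
  (∀ t, 0 < t → ∀ x, x ∉ frontier f.Per → x < (F t).canon x)

/-- `δ_{f,g}(x,t)`, where `F` is a positive one-parameter family commuting with `f`. -/
noncomputable def delta (F : ℝ → HomeoZR) (g : HomeoZR) (x t : ℝ) : ℝ :=
  ((F t).canon ∘ g.canon)^[g.q] x - x - (g.p : ℝ)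

/-- Persistent periodic points. -/
def Pset (F : ℝ → HomeoZR) (g : HomeoZR) : Set ℝ := {x | ∀ t, delta F g x t = 0}

/-- Never-periodic points. -/
def Nset (F : ℝ → HomeoZR) (g : HomeoZR) : Set ℝ := {x | ∀ t, delta F g x t ≠ 0}

/-- Points periodic at a unique time. -/
def Uset (F : ℝ → HomeoZR) (g : HomeoZR) : Set ℝ := {x | ∃! t, delta F g x t = 0}

/-- `x` has a finite orbit in the circle under the group generated by `f` and `g`. -/
def FiniteOrbit (f g : HomeoZR) (x : ℝ) : Prop :=
  ∃ S : Set ℝ, S.Finite ∧ x ∈ S ∧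
    (∀ y ∈ S, ∃ z ∈ S, ∃ m : ℤ, f.toFun y = z + m) ∧
    (∀ y ∈ S, ∃ z ∈ S, ∃ m : ℤ, g.toFun y = z + m)

/-- `τ(f_1, …, f_n) = rot̃(f_n ∘ ⋯ ∘ f_1) − Σ rot̃(f_i)`. -/
noncomputable def tau (L : List HomeoZR) : ℝ :=
  (L.foldl (fun h u => u.comp h) HomeoZR.id).transNum
    - (L.map HomeoZR.transNum).sum

/-!
Fixed points of `F_t` are the solutions of `h x = t` for `h x = x - f x`; `h` is continuous
and tends to `±∞`, so one always exists. If `h x = h y = t` with `x < y`, then `h` exceeds `t`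
somewhere in `[x, y]`, or drops below `t` there, or is constantly `t` on `[x, y]`; the last
case happens for countably many `t`, and the second one is the first one for `x ↦ -f (-x)`.
In the first case the last solution of `h = t` lies in the rising-sun shadow of `h`, and on
last solutions `h` is `1`-Lipschitz, so these `t` have measure at most that of the shadow.
Since `h` rises with slope at most `1` and `h - id` takes values in `[-b, -a]`, the running
maximum of `h` is `1`-Lipschitz, takes countably many values on the shadow and grows by at
least `(d - c) - (b - a)` on `[c, d]`; hence the shadow has measure at most `b - a`.
-/

theorem LipschitzOnWith.volume_image_le {φ : ℝ → ℝ} {s : Set ℝ} (hφ : LipschitzOnWith 1 φ s) :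
    volume (φ '' s) ≤ volume s := by
  simpa [hausdorffMeasure_real] using hφ.hausdorffMeasure_image_le (d := 1) zero_le_one

section FixedPointLevels

variable {f : ℝ → ℝ} {a b : ℝ}

theorem tendsto_self_sub_atTop (hfab : ∀ x, f x ∈ Icc a b) :
    Tendsto (fun x => x - f x) atTop atTop :=
  tendsto_atTop_mono (fun x => show x + -b ≤ x - f x by linarith [(hfab x).2])
    (tendsto_atTop_add_const_right _ (-b) tendsto_id)

theorem tendsto_self_sub_atBot (hfab : ∀ x, f x ∈ Icc a b) :
    Tendsto (fun x => x - f x) atBot atBot :=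
  tendsto_atBot_mono (fun x => show x - f x ≤ x + -a by linarith [(hfab x).1])
    (tendsto_atBot_add_const_right _ (-a) tendsto_id)

theorem surjective_self_sub (hfc : Continuous f) (hfab : ∀ x, f x ∈ Icc a b) :
    Surjective (fun x => x - f x) :=
  (continuous_id.sub hfc).surjective (tendsto_self_sub_atTop hfab) (tendsto_self_sub_atBot hfab)

/-- F. Riesz's rising-sun set of `x ↦ x - f x`. -/
def shadow (f : ℝ → ℝ) : Set ℝ := {x | ∃ y < x, x - f x < y - f y}

noncomputable def runningMax (f : ℝ → ℝ) (x : ℝ) : ℝ := sSup ((fun y => y - f y) '' Iic x)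

theorem runningMax_le {x c : ℝ} (h : ∀ y ≤ x, y - f y ≤ c) : runningMax f x ≤ c :=
  csSup_le (nonempty_Iic.image _) (by rintro _ ⟨y, hy, rfl⟩; exact h y hy)

theorem runningMax_le_sub (hfab : ∀ x, f x ∈ Icc a b) (x : ℝ) : runningMax f x ≤ x - a :=
  runningMax_le fun y hy => by linarith [(hfab y).1]

theorem sub_le_runningMax (hfab : ∀ x, f x ∈ Icc a b) {x y : ℝ} (hyx : y ≤ x) :
    y - f y ≤ runningMax f x :=
  le_csSup ⟨x - a, by rintro _ ⟨z, hz, rfl⟩; linarith [(hfab z).1, mem_Iic.1 hz]⟩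
    (mem_image_of_mem _ hyx)

theorem runningMax_mono (hfab : ∀ x, f x ∈ Icc a b) : Monotone (runningMax f) :=
  fun _ _ hxy => runningMax_le fun _ hz => sub_le_runningMax hfab (hz.trans hxy)

theorem runningMax_le_add (hf : Monotone f) (hfab : ∀ x, f x ∈ Icc a b) {x y : ℝ}
    (hxy : x ≤ y) : runningMax f y ≤ runningMax f x + (y - x) :=
  runningMax_le fun z hzy => by
    rcases le_total z x with hzx | hxz
    · linarith [sub_le_runningMax hfab hzx]
    · linarith [sub_le_runningMax hfab (le_refl x), hf hxz]

theorem lipschitzWith_runningMax (hf : Monotone f) (hfab : ∀ x, f x ∈ Icc a b) :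
    LipschitzWith 1 (runningMax f) :=
  LipschitzWith.of_le_add fun x y => by
    rw [Real.dist_eq]
    rcases le_total x y with hxy | hyx
    · linarith [runningMax_mono hfab hxy, abs_nonneg (x - y)]
    · linarith [runningMax_le_add hf hfab hyx, le_abs_self (x - y)]

theorem shadow_eq (hfab : ∀ x, f x ∈ Icc a b) :
    shadow f = {x | x - f x < runningMax f x} := by
  ext x
  constructor
  · rintro ⟨y, hyx, hy⟩
    exact hy.trans_le (sub_le_runningMax hfab hyx.le)
  · intro (hx : x - f x < sSup _)
    obtain ⟨_, ⟨y, hyx, rfl⟩, hy⟩ := exists_lt_of_lt_csSup (nonempty_Iic.image _) hx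
    exact ⟨y, lt_of_le_of_ne hyx (by rintro rfl; exact hy.false), hy⟩

theorem isOpen_shadow (hf : Monotone f) (hfc : Continuous f) (hfab : ∀ x, f x ∈ Icc a b) :
    IsOpen (shadow f) :=
  shadow_eq hfab ▸ isOpen_lt (continuous_id.sub hfc) (lipschitzWith_runningMax hf hfab).continuous

/-- The running maximum is constant just to the right of a shadowed point. -/
theorem exists_rat_runningMax_eq (hfc : Continuous f) (hfab : ∀ x, f x ∈ Icc a b) {x : ℝ}
    (hx : x ∈ shadow f) : ∃ q : ℚ, runningMax f q = runningMax f x := by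
  rw [shadow_eq hfab] at hx
  obtain ⟨ε, hε, hball⟩ := Metric.eventually_nhds_iff.1 <|
    (continuous_id.sub hfc).continuousAt.eventually_lt continuousAt_const hx
  obtain ⟨q, hxq, hqx⟩ := exists_rat_btwn (lt_add_of_pos_right x hε)
  refine ⟨q, le_antisymm (runningMax_le fun y hyq => ?_) (runningMax_mono hfab hxq.le)⟩
  rcases le_total y x with hyx | hxy
  · exact sub_le_runningMax hfab hyx
  · exact (hball (by rw [Real.dist_eq, abs_of_nonneg (by linarith)]; linarith)).le

theorem countable_runningMax_image_shadow (hfc : Continuous f) (hfab : ∀ x, f x ∈ Icc a b) :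
    (runningMax f '' shadow f).Countable :=
  (countable_range fun q : ℚ => runningMax f q).mono <| by
    rintro _ ⟨x, hx, rfl⟩
    exact exists_rat_runningMax_eq hfc hfab hx

theorem volume_shadow_inter_Icc_le (hf : Monotone f) (hfc : Continuous f)
    (hfab : ∀ x, f x ∈ Icc a b) (c d : ℝ) :
    volume (shadow f ∩ Icc c d) ≤ ENNReal.ofReal (b - a) := by
  rcases lt_or_ge d c with hdc | hcd
  · simp [Icc_eq_empty_of_lt hdc]
  set M := runningMax f
  have hMc : M c ≤ M d := runningMax_mono hfab hcd
  have hcover : Icc (M c) (M d) ⊆ M '' (Icc c d \ shadow f) ∪ M '' shadow f := by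
    intro s hs
    obtain ⟨x, hx, rfl⟩ :=
      intermediate_value_Icc hcd (lipschitzWith_runningMax hf hfab).continuous.continuousOn hs
    by_cases hxs : x ∈ shadow f
    · exact Or.inr (mem_image_of_mem _ hxs)
    · exact Or.inl (mem_image_of_mem _ ⟨hx, hxs⟩)
  have hgain : ENNReal.ofReal (M d - M c) ≤ volume (Icc c d \ shadow f) := calc
    ENNReal.ofReal (M d - M c) = volume (Icc (M c) (M d)) := Real.volume_Icc.symm
    _ ≤ volume (M '' (Icc c d \ shadow f)) + volume (M '' shadow f) :=
      (measure_mono hcover).trans (measure_union_le _ _)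
    _ = volume (M '' (Icc c d \ shadow f)) := by
      rw [(countable_runningMax_image_shadow hfc hfab).measure_zero, add_zero]
    _ ≤ volume (Icc c d \ shadow f) :=
      (lipschitzWith_runningMax hf hfab).lipschitzOnWith.volume_image_le
  have hsplit := measure_inter_add_sdiff (μ := volume) (Icc c d)
    (isOpen_shadow hf hfc hfab).measurableSet
  have hMd : d - b ≤ M d := by linarith [sub_le_runningMax hfab (le_refl d), (hfab d).2]
  calc volume (shadow f ∩ Icc c d)
      ≤ ENNReal.ofReal (d - c) - ENNReal.ofReal (M d - M c) := by
        rw [← Real.volume_Icc, ← hsplit, inter_comm]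
        exact ENNReal.le_sub_of_add_le_right ENNReal.ofReal_ne_top (add_le_add le_rfl hgain)
    _ = ENNReal.ofReal ((d - c) - (M d - M c)) :=
        (ENNReal.ofReal_sub _ (sub_nonneg.2 hMc)).symm
    _ ≤ ENNReal.ofReal (b - a) :=
        ENNReal.ofReal_le_ofReal (by linarith [runningMax_le_sub hfab c])

theorem volume_shadow_le (hf : Monotone f) (hfc : Continuous f) (hfab : ∀ x, f x ∈ Icc a b) :
    volume (shadow f) ≤ ENNReal.ofReal (b - a) := by
  have hcover : ⋃ n : ℕ, Icc (-n : ℝ) n = univ :=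
    eq_univ_of_forall fun x => mem_iUnion.2 ⟨⌈|x|⌉₊, abs_le.1 (Nat.le_ceil _)⟩
  have hmono : Monotone fun n : ℕ => shadow f ∩ Icc (-n : ℝ) n := fun m n hmn =>
    inter_subset_inter_right _ (Icc_subset_Icc (neg_le_neg (Nat.cast_le.2 hmn)) (Nat.cast_le.2 hmn))
  rw [← inter_univ (shadow f), ← hcover, inter_iUnion, hmono.measure_iUnion]
  exact iSup_le fun n => volume_shadow_inter_Icc_le hf hfc hfab _ _

def lastVisits (f : ℝ → ℝ) : Set ℝ := {y | ∀ z, y < z → y - f y < z - f z}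

theorem lipschitzOnWith_lastVisits (hf : Monotone f) :
    LipschitzOnWith 1 (fun x => x - f x) (lastVisits f) :=
  LipschitzOnWith.of_le_add fun x hx y _ => by
    rcases lt_trichotomy x y with hxy | rfl | hyx
    · linarith [hx y hxy, dist_nonneg (x := x) (y := y)]
    · simp
    · rw [Real.dist_eq, abs_of_pos (sub_pos.2 hyx)]
      linarith [hf hyx.le]

theorem exists_mem_lastVisits (hfc : Continuous f) (hfab : ∀ x, f x ∈ Icc a b) (y : ℝ) :
    ∃ y' ∈ lastVisits f, y ≤ y' ∧ y' - f y' = y - f y := by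
  set t := y - f y
  have hS : IsCompact (Icc y (t + b) ∩ {z | z - f z = t}) :=
    isCompact_Icc.inter_right (isClosed_eq (continuous_id.sub hfc) continuous_const)
  obtain ⟨y', ⟨⟨hyy', -⟩, hy't⟩, hmax⟩ :=
    hS.exists_isGreatest ⟨y, ⟨le_rfl, by linarith [(hfab y).2]⟩, rfl⟩
  refine ⟨y', fun z hz => ?_, hyy', hy't⟩
  by_contra! hzt
  obtain ⟨w, hzw, hwt⟩ := intermediate_value_Ici (continuous_id.sub hfc).continuousOn
    (tendsto_self_sub_atTop hfab) (show t ∈ Ici (z - f z) from hy't ▸ hzt)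
  have hwb : w ≤ t + b := by linarith [(hfab w).2, show w - f w = t from hwt]
  linarith [hmax ⟨⟨hyy'.trans (hz.le.trans hzw), hwb⟩, hwt⟩, mem_Ici.1 hzw]

def peakLevels (f : ℝ → ℝ) : Set ℝ := {t | ∃ z y, z < y ∧ t < z - f z ∧ y - f y = t}

theorem peakLevels_subset (hfc : Continuous f) (hfab : ∀ x, f x ∈ Icc a b) :
    peakLevels f ⊆ (fun x => x - f x) '' (shadow f ∩ lastVisits f) := by
  rintro t ⟨z, y, hzy, hz, rfl⟩
  obtain ⟨y', hy'R, hyy', hy't⟩ := exists_mem_lastVisits hfc hfab y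
  exact ⟨y', ⟨⟨z, hzy.trans_le hyy', hy't ▸ hz⟩, hy'R⟩, hy't⟩

theorem volume_peakLevels_le (hf : Monotone f) (hfc : Continuous f)
    (hfab : ∀ x, f x ∈ Icc a b) : volume (peakLevels f) ≤ ENNReal.ofReal (b - a) := calc
  _ ≤ volume ((fun x => x - f x) '' (shadow f ∩ lastVisits f)) :=
    measure_mono (peakLevels_subset hfc hfab)
  _ ≤ volume (shadow f ∩ lastVisits f) :=
    ((lipschitzOnWith_lastVisits hf).mono inter_subset_right).volume_image_le
  _ ≤ volume (shadow f) := measure_mono inter_subset_left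
  _ ≤ _ := volume_shadow_le hf hfc hfab

/-- Reflecting `f` turns a dip of `x ↦ x - f x` below a level into a peak above it. -/
def exceptionalLevels (f : ℝ → ℝ) : Set ℝ :=
  peakLevels f ∪ -peakLevels (fun x => -f (-x)) ∪ range fun q : ℚ => (q : ℝ) - f q

theorem mem_exceptionalLevels_of_lt {x y t : ℝ} (hxy : x < y) (hx : x - f x = t)
    (hy : y - f y = t) : t ∈ exceptionalLevels f := by
  by_cases hpeak : ∃ z ∈ Icc x y, t < z - f z
  · obtain ⟨z, hz, hzt⟩ := hpeak
    exact Or.inl (Or.inl ⟨z, y, lt_of_le_of_ne hz.2 (by rintro rfl; linarith), hzt, hy⟩)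
  by_cases hvalley : ∃ z ∈ Icc x y, z - f z < t
  · obtain ⟨z, hz, hzt⟩ := hvalley
    refine Or.inl (Or.inr ⟨-z, -x, neg_lt_neg (lt_of_le_of_ne hz.1 ?_), ?_, ?_⟩)
    · rintro rfl; linarith
    · simp only [neg_neg]; linarith
    · simp only [neg_neg]; linarith
  push Not at hpeak hvalley
  obtain ⟨q, hxq, hqy⟩ := exists_rat_btwn hxy
  exact Or.inr ⟨q, le_antisymm (hpeak q ⟨hxq.le, hqy.le⟩) (hvalley q ⟨hxq.le, hqy.le⟩)⟩

theorem volume_exceptionalLevels_lt_top (hf : Monotone f) (hfc : Continuous f)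
    (hfab : ∀ x, f x ∈ Icc a b) : volume (exceptionalLevels f) < ⊤ := by
  have hf' : Monotone fun x => -f (-x) := fun x y hxy => neg_le_neg (hf (neg_le_neg hxy))
  have hfab' : ∀ x, -f (-x) ∈ Icc (-b) (-a) :=
    fun x => ⟨neg_le_neg (hfab _).2, neg_le_neg (hfab _).1⟩
  refine measure_union_lt_top (measure_union_lt_top ?_ ?_) ?_
  · exact (volume_peakLevels_le hf hfc hfab).trans_lt ENNReal.ofReal_lt_top
  · rw [Measure.measure_neg]
    exact (volume_peakLevels_le hf' (by fun_prop) hfab').trans_lt ENNReal.ofReal_lt_top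
  · exact ((countable_range _).measure_zero _).trans_lt ENNReal.zero_lt_top

end FixedPointLevels

/-- case `n = 1` of the EHN lemma. For an increasing homeomorphism
`f : ℝ → (a,b)` onto a bounded interval, outside a set of finite Lebesgue measure,
the map `x ↦ f(x) + t` has a unique fixed point. -/
theorem EHN_unique_fixed_point_one (f : ℝ → ℝ)
    (hmono : StrictMono f) (hcont : Continuous f)
    (a b : ℝ) (hrange : Set.range f = Set.Ioo a b) :
    ∃ N : Set ℝ, MeasureTheory.volume N < ⊤ ∧
      ∀ t : ℝ, t ∉ N → ∃! x : ℝ, f x + t = x := by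
  have hfab : ∀ x, f x ∈ Icc a b := fun x => Ioo_subset_Icc_self (hrange ▸ mem_range_self x)
  refine ⟨exceptionalLevels f, volume_exceptionalLevels_lt_top hmono.monotone hcont hfab,
    fun t ht => ?_⟩
  obtain ⟨x, hx⟩ := surjective_self_sub hcont hfab t
  refine ⟨x, by linarith [show x - f x = t from hx], fun y hy => ?_⟩
  by_contra hyx
  rcases lt_or_gt_of_ne hyx with h | h
  · exact ht (mem_exceptionalLevels_of_lt h (by linarith) hx)
  · exact ht (mem_exceptionalLevels_of_lt h hx (by linarith))
end

section
/- Let f, g ∈ Homeo⁺(S¹) have rational rotation numbers, let f_t be a positive one-parameter family commuting with f, and suppose g_t = f_t∘g has constant rotation number. Define U(f,g) as the set of points x for which there is a unique t with δ_{f,g}(x,t) = 0. Then U(f,g) is open, and the map T : U(f,g) → ℝ assigning to x the unique such t is continuous. -/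
/-!
If `∂Per(f)` is empty, every `f_t` with `t ≠ 0` acts without fixed points, so `t ↦ rot̃(f_t)` is an
injective additive map and the family is semiconjugate to translations by a dense subgroup of `ℝ`.
Since the translation number of `x ↦ β + h x` depends continuously on `β` and grows by `1` on
`[0, 1]`, the rotation number of `f_t ∘ g` cannot be constant.

Otherwise the canonical lifts of the `f_t` form a flow fixing `∂Per(f)` and pushing every other
point to the right. Then `t ↦ δ(x, t)` is continuous and monotone, and if it is constant on an
interval then the relevant orbit points lie in `∂Per(f)`, so it is constant everywhere. Hence the
sign change of `δ(x, ·)` across its unique zero persists for nearby `x`, and confines the nearby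
zero to a small interval.
-/

open Set Function Filter MeasureTheory

open Topology

theorem continuous_uncurry_of_monotone_of_continuous {Φ : ℝ → ℝ → ℝ}
    (hmono₁ : ∀ y, Monotone (Φ · y)) (hmono₂ : ∀ t, Monotone (Φ t))
    (hcont₁ : ∀ y, Continuous (Φ · y)) (hcont₂ : ∀ t, Continuous (Φ t)) :
    Continuous (uncurry Φ) := by
  refine continuous_iff_continuousAt.2 fun ⟨t₀, y₀⟩ =>
    tendsto_order.2 ⟨fun a ha => ?_, fun b hb => ?_⟩
  · obtain ⟨t₁, ht₁, hat₁⟩ := ((hcont₁ y₀).continuousAt.eventually (lt_mem_nhds ha)).exists_lt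
    obtain ⟨y₁, hy₁, hay₁⟩ := ((hcont₂ t₁).continuousAt.eventually (lt_mem_nhds hat₁)).exists_lt
    filter_upwards [prod_mem_nhds (Ioi_mem_nhds ht₁) (Ioi_mem_nhds hy₁)] with p hp
    exact hay₁.trans_le ((hmono₂ t₁ hp.2.le).trans (hmono₁ p.2 hp.1.le))
  · obtain ⟨t₁, ht₁, hbt₁⟩ := ((hcont₁ y₀).continuousAt.eventually (gt_mem_nhds hb)).exists_gt
    obtain ⟨y₁, hy₁, hby₁⟩ := ((hcont₂ t₁).continuousAt.eventually (gt_mem_nhds hbt₁)).exists_gt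
    filter_upwards [prod_mem_nhds (Iio_mem_nhds ht₁) (Iio_mem_nhds hy₁)] with p hp
    exact ((hmono₁ p.2 hp.1.le).trans (hmono₂ t₁ hp.2.le)).trans_lt hby₁

section UniqueZero

variable {u : ℝ → ℝ}

theorem exists_eq_zero_mem_Ioo_and_unique (hcont : Continuous u) (hmono : Monotone u)
    (hrigid : ∀ s t, s < t → u s = u t → ∀ r, u r = u s) {a b : ℝ} (ha : u a < 0) (hb : 0 < u b) :
    ∃ t ∈ Ioo a b, ∀ t', u t' = 0 ↔ t' = t := by
  have hab : a ≤ b := (hmono.reflect_lt (ha.trans hb)).le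
  obtain ⟨t, ht, hut⟩ := intermediate_value_Ioo hab hcont.continuousOn ⟨ha, hb⟩
  refine ⟨t, ht, fun t' => ⟨fun hut' => ?_, fun h => h ▸ hut⟩⟩
  by_contra hne
  rcases lt_or_gt_of_ne hne with h | h
  · exact ha.ne (by rw [hrigid t' t h (hut'.trans hut.symm) a, hut'])
  · exact ha.ne (by rw [hrigid t t' h (hut.trans hut'.symm) a, hut])

theorem neg_of_lt_of_unique_zero (hmono : Monotone u) {t₀ t : ℝ} (hu : u t₀ = 0)
    (huniq : ∀ t', u t' = 0 → t' = t₀) (ht : t < t₀) : u t < 0 :=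
  (hu ▸ hmono ht.le).lt_of_ne fun h => ht.ne (huniq t h)

theorem pos_of_lt_of_unique_zero (hmono : Monotone u) {t₀ t : ℝ} (hu : u t₀ = 0)
    (huniq : ∀ t', u t' = 0 → t' = t₀) (ht : t₀ < t) : 0 < u t :=
  (hu ▸ hmono ht.le).lt_of_ne fun h => ht.ne' (huniq t h.symm)

variable {X : Type*} [TopologicalSpace X] {d : X → ℝ → ℝ}

theorem eventually_existsUnique_zero_mem_Ioo (hx : ∀ t, Continuous (d · t))
    (ht : ∀ x, Continuous (d x)) (hmono : ∀ x, Monotone (d x))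
    (hrigid : ∀ x s t, s < t → d x s = d x t → ∀ r, d x r = d x s)
    {x₀ : X} {t₀ : ℝ} (h₀ : d x₀ t₀ = 0) (huniq : ∀ t, d x₀ t = 0 → t = t₀) {ε : ℝ}
    (hε : 0 < ε) : ∀ᶠ x in 𝓝 x₀, ∃ t ∈ Ioo (t₀ - ε) (t₀ + ε), ∀ t', d x t' = 0 ↔ t' = t := by
  have hneg := neg_of_lt_of_unique_zero (hmono x₀) h₀ huniq (sub_lt_self t₀ hε)
  have hpos := pos_of_lt_of_unique_zero (hmono x₀) h₀ huniq (lt_add_of_pos_right t₀ hε)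
  filter_upwards [(hx _).continuousAt.eventually_lt continuousAt_const hneg,
    continuousAt_const.eventually_lt (hx _).continuousAt hpos] with x hxneg hxpos
  exact exists_eq_zero_mem_Ioo_and_unique (ht x) (hmono x) (hrigid x) hxneg hxpos

theorem isOpen_and_continuousOn_unique_zero (hx : ∀ t, Continuous (d · t))
    (ht : ∀ x, Continuous (d x)) (hmono : ∀ x, Monotone (d x))
    (hrigid : ∀ x s t, s < t → d x s = d x t → ∀ r, d x r = d x s) :
    IsOpen {x | ∃! t, d x t = 0} ∧ ∃ T : X → ℝ,
      (∀ x ∈ {x | ∃! t, d x t = 0}, d x (T x) = 0) ∧ ContinuousOn T {x | ∃! t, d x t = 0} := by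
  refine ⟨isOpen_iff_mem_nhds.2 fun x₀ ⟨t₀, h₀, huniq⟩ => ?_,
    fun x => Classical.epsilon (d x · = 0),
    fun x ⟨t, h, _⟩ => Classical.epsilon_spec (p := (d x · = 0)) ⟨t, h⟩,
    fun x₀ hx₀ => ContinuousAt.continuousWithinAt ?_⟩
  · filter_upwards [eventually_existsUnique_zero_mem_Ioo hx ht hmono hrigid h₀ huniq one_pos]
      with x ⟨t, _, ht⟩
    exact ⟨t, (ht t).2 rfl, fun t' => (ht t').1⟩
  · obtain ⟨t₀, h₀, huniq⟩ := hx₀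
    have hT : ∀ x t, (∀ t', d x t' = 0 ↔ t' = t) → Classical.epsilon (d x · = 0) = t :=
      fun x t ht => (ht _).1 (Classical.epsilon_spec (p := (d x · = 0)) ⟨t, (ht t).2 rfl⟩)
    rw [ContinuousAt, hT x₀ t₀ fun t' => ⟨huniq t', fun h => h ▸ h₀⟩, Metric.tendsto_nhds]
    intro ε hε
    filter_upwards [eventually_existsUnique_zero_mem_Ioo hx ht hmono hrigid h₀ huniq hε]
      with x ⟨t, htε, ht⟩
    rwa [hT x t ht, ← Metric.mem_ball, Real.ball_eq_Ioo]

end UniqueZero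

structure IsPositiveFlow (φ : ℝ → ℝ → ℝ) (E : Set ℝ) : Prop where
  apply_apply : ∀ s t x, φ s (φ t x) = φ (s + t) x
  strictMono : ∀ t, StrictMono (φ t)
  continuous : ∀ t, Continuous (φ t)
  apply_of_mem : ∀ t, ∀ x ∈ E, φ t x = x
  lt_apply : ∀ t, 0 < t → ∀ x ∉ E, x < φ t x

namespace IsPositiveFlow

variable {φ : ℝ → ℝ → ℝ} {E : Set ℝ} (hφ : IsPositiveFlow φ E)
include hφ

theorem zero_apply (x : ℝ) : φ 0 x = x :=
  (hφ.strictMono 0).injective (by rw [hφ.apply_apply, add_zero])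

theorem le_apply {t : ℝ} (ht : 0 ≤ t) (x : ℝ) : x ≤ φ t x := by
  rcases ht.eq_or_lt with rfl | ht
  · rw [hφ.zero_apply]
  by_cases hx : x ∈ E
  · rw [hφ.apply_of_mem t x hx]
  · exact (hφ.lt_apply t ht x hx).le

theorem apply_mono_left {s t : ℝ} (hst : s ≤ t) (x : ℝ) : φ s x ≤ φ t x := by
  simpa only [hφ.apply_apply, sub_add_cancel] using hφ.le_apply (sub_nonneg.2 hst) (φ s x)

theorem mem_of_apply_eq {t x : ℝ} (ht : t ≠ 0) (hx : φ t x = x) : x ∈ E := by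
  by_contra hxE
  rcases ht.lt_or_gt with ht | ht
  · have h := hφ.lt_apply (-t) (neg_pos.2 ht) x hxE
    conv_rhs at h => rw [← hx, hφ.apply_apply, neg_add_cancel, hφ.zero_apply]
    exact h.false
  · exact (hφ.lt_apply t ht x hxE).ne' hx

/-- Monotone in time, `t ↦ φ t x` is continuous at some time; the flow law moves that time
anywhere. -/
theorem continuous_apply_left (x : ℝ) : Continuous (φ · x) := by
  obtain ⟨t₁, ht₁⟩ : ∃ t₁, ContinuousAt (φ · x) t₁ := by
    by_contra! h
    have hmono : Monotone (φ · x) := fun _ _ h => hφ.apply_mono_left h x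
    exact not_countable_univ (hmono.countable_not_continuousAt.mono fun t _ => h t)
  refine continuous_iff_continuousAt.2 fun t₀ => ?_
  have hshift : ContinuousAt (fun t => φ (t₀ - t₁) (φ (t - t₀ + t₁) x)) t₀ :=
    (hφ.continuous _).continuousAt.comp_of_eq
      (ht₁.comp_of_eq (by fun_prop) (by ring)) rfl
  have hflow : (fun t => φ (t₀ - t₁) (φ (t - t₀ + t₁) x)) = (φ · x) :=
    funext fun t => by rw [hφ.apply_apply]; ring_nf
  rwa [hflow] at hshift

theorem continuous_uncurry : Continuous (uncurry φ) :=
  continuous_uncurry_of_monotone_of_continuous (fun y _ _ h => hφ.apply_mono_left h y)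
    (fun t => (hφ.strictMono t).monotone) hφ.continuous_apply_left hφ.continuous

variable {G : ℝ → ℝ}

theorem continuous_iterate_left (hG : Continuous G) (x : ℝ) (k : ℕ) :
    Continuous fun t => (φ t ∘ G)^[k] x := by
  induction k with
  | zero => exact continuous_const
  | succ k ih =>
    simp only [iterate_succ_apply', comp_apply]
    exact hφ.continuous_uncurry.comp (continuous_id.prodMk (hG.comp ih))

theorem iterate_le_iterate (hG : Monotone G) {s t : ℝ} (hst : s ≤ t) (k : ℕ) (x : ℝ) :
    (φ s ∘ G)^[k] x ≤ (φ t ∘ G)^[k] x :=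
  Monotone.iterate_le_of_le ((hφ.strictMono s).monotone.comp hG)
    (fun y => hφ.apply_mono_left hst (G y)) k x

theorem iterate_lt_iterate_add (hG : StrictMono G) {s t : ℝ} (hst : s ≤ t) {k : ℕ} {x : ℝ}
    (hk : (φ s ∘ G)^[k] x < (φ t ∘ G)^[k] x) (j : ℕ) :
    (φ s ∘ G)^[k + j] x < (φ t ∘ G)^[k + j] x := by
  induction j with
  | zero => exact hk
  | succ j ih =>
    rw [← add_assoc, iterate_succ_apply', iterate_succ_apply']
    exact ((hφ.strictMono s).comp hG ih).trans_le (hφ.apply_mono_left hst _)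

/-- If the `n`-th iterates at times `s < t` agree, each intermediate orbit point is fixed by
`φ (t - s)`, hence lies in `E` and is fixed by the whole flow. -/
theorem iterate_eq_of_iterate_eq (hG : StrictMono G) {s t : ℝ} (hst : s < t) {n : ℕ} {x : ℝ}
    (heq : (φ s ∘ G)^[n] x = (φ t ∘ G)^[n] x) (r : ℝ) :
    (φ r ∘ G)^[n] x = (φ s ∘ G)^[n] x := by
  have hagree : ∀ k ≤ n, (φ s ∘ G)^[k] x = (φ t ∘ G)^[k] x := fun k hk =>
    (hφ.iterate_le_iterate hG.monotone hst.le k x).antisymm <| not_lt.1 fun hlt =>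
      (hφ.iterate_lt_iterate_add hG hst.le hlt (n - k)).ne (by rwa [Nat.add_sub_cancel' hk])
  have hmem : ∀ k < n, (φ s ∘ G)^[k + 1] x ∈ E := fun k hk => by
    refine hφ.mem_of_apply_eq (sub_ne_zero.2 hst.ne') ?_
    conv_rhs => rw [hagree (k + 1) hk]
    rw [iterate_succ_apply', iterate_succ_apply', ← hagree k hk.le, comp_apply, comp_apply,
      hφ.apply_apply, sub_add_cancel]
  have hforward : ∀ k ≤ n, (φ r ∘ G)^[k] x = (φ s ∘ G)^[k] x := by
    intro k
    induction k with
    | zero => exact fun _ => rfl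
    | succ k ih =>
      intro hk
      have hk' := hmem k hk
      rw [iterate_succ_apply' (φ s ∘ G)] at hk' ⊢
      rw [iterate_succ_apply', ih (Nat.le_of_succ_le hk), comp_apply, ← sub_add_cancel r s,
        ← hφ.apply_apply]
      exact hφ.apply_of_mem _ _ hk'
  exact hforward n le_rfl

end IsPositiveFlow

theorem AddMonoidHom.denseRange_of_apply_ne_zero (ρ : ℝ →+ ℝ) {a : ℝ} (ha : ρ a ≠ 0) :
    DenseRange ρ := by
  have hrat : DenseRange fun q : ℚ => (q : ℝ) * ρ a :=
    (mul_right_surjective₀ ha).denseRange.comp Rat.denseRange_cast (continuous_mul_const _)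
  refine Dense.mono (s₁ := Set.range fun q : ℚ => (q : ℝ) * ρ a) ?_ hrat
  rintro _ ⟨q, rfl⟩
  exact ⟨q * a, by simpa only [Rat.smul_def] using map_rat_smul ρ q a⟩

section Semiconj

variable {ι : Type*} [Uncountable ι] {w : ℝ → ℝ} {h : ι → ℝ → ℝ} {ρ : ι → ℝ}

/-- A plateau `[a, b]` of `w` would be carried by the maps `h i` to uncountably many disjoint
plateaus, each containing a rational. -/
theorem injective_of_semiconj_translate (hw : Monotone w) (hh : ∀ i, StrictMono (h i))
    (hρ : Injective ρ) (hsc : ∀ i x, w (h i x) = ρ i + w x) : Injective w := by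
  refine Injective.of_lt_imp_ne fun a b hab hwab => ?_
  choose q hq₁ hq₂ using fun i => exists_rat_btwn (hh i hab)
  have hwq : ∀ i, w (q i) = ρ i + w a := fun i => le_antisymm
    (by simpa only [hsc, hwab] using hw (hq₂ i).le) (by simpa only [hsc] using hw (hq₁ i).le)
  exact not_countable (Injective.countable (f := q) fun i j hij =>
    hρ (add_right_cancel (by rw [← hwq, ← hwq, hij])))

/-- A discontinuity of `w` at `j` is carried to a discontinuity at each `h i j`, and these points
are pairwise distinct. -/
theorem continuous_of_semiconj_translate (hw : Monotone w) (hh : ∀ i, Continuous (h i))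
    (hρ : Injective ρ) (hsc : ∀ i x, w (h i x) = ρ i + w x) : Continuous w := by
  refine continuous_iff_continuousAt.2 fun j => by_contra fun hj => ?_
  have hmaps : MapsTo (fun i => h i j) univ {x | ¬ContinuousAt w x} := fun i _ hi => hj <| by
    have hcomp : ContinuousAt (fun x => w (h i x) - ρ i) j :=
      (hi.comp (hh i).continuousAt).sub continuousAt_const
    simpa only [hsc, add_sub_cancel_left] using hcomp
  refine not_countable_univ (hmaps.countable_of_injOn (fun i _ k _ hik => hρ ?_)
    hw.countable_not_continuousAt)
  simpa only [hsc, add_left_inj] using congrArg w hik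

end Semiconj

namespace CircleDeg1Lift

local notation "τ" => translationNumber

theorem continuous_translationNumber_of_continuous_pow {X : Type*} [TopologicalSpace X]
    {f : X → CircleDeg1Lift} (hf : ∀ n : ℕ, Continuous fun x => (f x ^ n) 0) :
    Continuous fun x => τ (f x) := by
  refine TendstoUniformly.continuous (F := fun (n : ℕ) x => (f x ^ n) 0 / n) (p := atTop) ?_
    (Eventually.of_forall fun n => (hf n).div_const _).frequently
  refine Metric.tendstoUniformly_iff.2 fun ε hε => ?_
  obtain ⟨N, hN⟩ := exists_nat_gt (1 / ε)
  filter_upwards [eventually_ge_atTop N] with n hn x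
  have hεn : 1 < (n : ℝ) * ε := (div_lt_iff₀ hε).1 (hN.trans_le (Nat.cast_le.2 hn))
  have hn : (0 : ℝ) < n := pos_of_mul_pos_left (one_pos.trans hεn) hε.le
  have hdist := dist_pow_map_zero_mul_translationNumber_le (f x) n
  rw [Real.dist_eq] at hdist
  rw [Real.dist_eq, abs_sub_comm, ← mul_div_cancel_left₀ (τ (f x)) hn.ne', ← sub_div, abs_div,
    abs_of_pos hn, div_lt_iff₀ hn]
  linarith

/-- The translation number of `x ↦ β + h x` runs continuously from `τ h` to `τ h + 1` as `β` runs
over `[0, 1]`, so it leaves `τ h + ℤ` on an open set of parameters `β`. -/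
theorem exists_translationNumber_translate_mul_ne {h : CircleDeg1Lift} (hh : Continuous h)
    {ι : Type*} {r : ι → ℝ} (hr : DenseRange r) :
    ∃ i, ∀ m : ℤ, τ (translate (Multiplicative.ofAdd (r i)) * h) ≠ τ h + m := by
  set V := fun β : ℝ => τ (translate (Multiplicative.ofAdd β) * h)
  have hV : Continuous V := continuous_translationNumber_of_continuous_pow fun n => by
    induction n with
    | zero => simpa only [pow_zero] using continuous_const
    | succ n ih =>
      simp only [pow_succ', mul_apply, translate_apply]
      exact continuous_id.add (hh.comp ih)
  have hV0 : V 0 = τ h := by simp [V]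
  have hV1 : V 1 = τ h + 1 := by
    have hcomm : Commute (translate (Multiplicative.ofAdd 1) : CircleDeg1Lift) h :=
      ext fun x => by simp only [mul_apply, translate_apply, map_one_add]
    simp only [V, translationNumber_mul_of_commute hcomm, translationNumber_translate, add_comm]
  obtain ⟨b, -, hb⟩ := intermediate_value_Ioo zero_le_one hV.continuousOn
    (show τ h + 1 / 2 ∈ Ioo (V 0) (V 1) by rw [hV0, hV1]; constructor <;> linarith)
  obtain ⟨i, hi⟩ := hr.exists_mem_open (isOpen_Ioo.preimage hV)
    ⟨b, show V b ∈ Ioo (τ h) (τ h + 1) by rw [hb]; constructor <;> linarith⟩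
  refine ⟨i, fun m hm => ?_⟩
  have hm' : (0 : ℝ) < m ∧ (m : ℝ) < 1 := by
    simp only [mem_preimage, V, hm, mem_Ioo] at hi
    constructor <;> linarith [hi.1, hi.2]
  norm_cast at hm'
  omega

end CircleDeg1Lift

namespace HomeoZR

theorem continuous_toFun (f : HomeoZR) : Continuous f.toFun :=
  (CircleDeg1Lift.continuous_iff_surjective f.toLift).2 fun y => ⟨f.invFun y, f.right_inv y⟩

theorem canon_strictMono (f : HomeoZR) : StrictMono f.canon := fun _ _ h =>
  sub_lt_sub_right (f.strictMono h) _

theorem continuous_canon (f : HomeoZR) : Continuous f.canon :=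
  f.continuous_toFun.sub continuous_const

theorem canon_eq_self_of_mem_fixS {f : HomeoZR} {x : ℝ} (hx : x ∈ f.FixS) : f.canon x = x := by
  obtain ⟨m, hm⟩ := hx
  rw [canon, hm, transNum, CircleDeg1Lift.translationNumber_of_eq_add_int f.toLift hm,
    Int.floor_intCast, add_sub_cancel_right]

/-- Both sides lift the same circle map, so they differ by a constant integer. -/
theorem canon_canon_eq_of_eq {a b c : HomeoZR} (habc : c.toFun = a.toFun ∘ b.toFun) {z : ℝ}
    (hz : a.canon (b.canon z) = c.canon z) (x : ℝ) : a.canon (b.canon x) = c.canon x := by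
  have hdiff : ∀ y, a.canon (b.canon y) - c.canon y =
      ⌊c.transNum⌋ - ⌊a.transNum⌋ - ⌊b.transNum⌋ := fun y => by
    simp only [canon, habc, comp_apply]
    rw [show a.toFun (b.toFun y - ⌊b.transNum⌋) = a.toFun (b.toFun y) - ⌊b.transNum⌋ from
      a.toLift.map_sub_int _ _]
    ring
  linarith [hdiff x, hdiff z]

def IsFlow (F : ℝ → HomeoZR) : Prop := ∀ s t, (F (s + t)).toFun = (F s).toFun ∘ (F t).toFun

namespace IsFlow

open CircleDeg1Lift

variable {F : ℝ → HomeoZR} (hF : IsFlow F)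
include hF

theorem toFun_zero (x : ℝ) : (F 0).toFun x = x :=
  (F 0).strictMono.injective (by rw [← comp_apply (f := (F 0).toFun), ← hF, add_zero])

theorem toLift_add (s t : ℝ) : (F (s + t)).toLift = (F s).toLift * (F t).toLift :=
  ext fun x => congrFun (hF s t) x

theorem transNum_add (s t : ℝ) : (F (s + t)).transNum = (F s).transNum + (F t).transNum := by
  have hcomm : Commute (F s).toLift (F t).toLift := by
    rw [Commute, SemiconjBy, ← hF.toLift_add, ← hF.toLift_add, add_comm]
  rw [transNum, hF.toLift_add, translationNumber_mul_of_commute hcomm]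
  rfl

noncomputable def transNumHom : ℝ →+ ℝ :=
  AddMonoidHom.mk' (fun t => (F t).transNum) hF.transNum_add

theorem exists_semiconj_translate :
    ∃ w : CircleDeg1Lift, ∀ t x, w ((F t).toFun x) = (F t).transNum + w x := by
  let act : Multiplicative ℝ →* CircleDeg1Lift :=
    { toFun := fun t => (F t.toAdd).toLift
      map_one' := ext hF.toFun_zero
      map_mul' := fun _ _ => hF.toLift_add _ _ }
  let shift : Multiplicative ℝ →* CircleDeg1Lift :=
    (Units.coeHom _).comp (translate.comp hF.transNumHom.toMultiplicative)
  obtain ⟨w, hw⟩ := semiconj_of_group_action_of_forall_translationNumber_eq act shift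
    fun t => (translationNumber_translate _).symm
  exact ⟨w, fun t => hw (Multiplicative.ofAdd t)⟩

theorem exists_transNum_comp_ne (hfree : ∀ t ≠ 0, (F t).FixS = ∅) (g : HomeoZR) :
    ∃ t, ∀ m : ℤ, ((F t).comp g).transNum ≠ g.transNum + m := by
  set ρ := hF.transNumHom
  have hρ_ne_int : ∀ t ≠ 0, ∀ m : ℤ, ρ t ≠ m := fun t ht m hm => by
    obtain ⟨x, hx⟩ := (translationNumber_eq_int_iff _ (F t).continuous_toFun).1 hm
    exact (hfree t ht).subset ⟨m, hx⟩
  have hρ : Injective ρ := (injective_iff_map_eq_zero ρ).2 fun t ht =>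
    by_contra fun h => hρ_ne_int t h 0 (by rw [ht, Int.cast_zero])
  obtain ⟨w, hw⟩ := hF.exists_semiconj_translate
  have hwcont : Continuous w :=
    continuous_of_semiconj_translate w.monotone (fun t => (F t).continuous_toFun) hρ hw
  obtain ⟨W, rfl⟩ := isUnit_iff_bijective.2
    ⟨injective_of_semiconj_translate w.monotone (fun t => (F t).strictMono) hρ hw,
      (continuous_iff_surjective _).1 hwcont⟩
  set h := (W : CircleDeg1Lift) * g.toLift * ↑W⁻¹
  have hh : Continuous h := hwcont.comp (g.continuous_toFun.comp
    ((continuous_iff_surjective _).2 fun y => ⟨W y, units_inv_apply_apply W y⟩))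
  have hconj : ∀ t, (F t).toLift * g.toLift =
      ↑W⁻¹ * (translate (Multiplicative.ofAdd (ρ t)) * h) * ↑W := fun t => ext fun x => by
    simp only [h, mul_apply, units_inv_apply_apply, translate_apply]
    rw [← units_inv_apply_apply W ((F t).toLift (g.toLift x))]
    exact congrArg _ (hw t _)
  obtain ⟨t, ht⟩ := exists_translationNumber_translate_mul_ne hh
    (ρ.denseRange_of_apply_ne_zero (hρ_ne_int 1 one_ne_zero 0 <| by rw [Int.cast_zero]; exact ·))
  refine ⟨t, fun m hm => ht m ?_⟩
  rw [← translationNumber_conj_eq' W, ← hconj, translationNumber_conj_eq]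
  exact hm

end IsFlow

end HomeoZR

namespace PosFamily

variable {f : HomeoZR} {F : ℝ → HomeoZR} (hF : PosFamily f F)
include hF

theorem isFlow : HomeoZR.IsFlow F := hF.1

theorem mem_fixS_of_mem_frontier {z : ℝ} (hz : z ∈ frontier f.Per) (t : ℝ) :
    z ∈ (F t).FixS := by
  rcases eq_or_ne t 0 with rfl | ht
  · exact ⟨0, by rw [hF.isFlow.toFun_zero, Int.cast_zero, add_zero]⟩
  · rwa [hF.2.2.1 t ht]

theorem isPositiveFlow {z : ℝ} (hz : z ∈ frontier f.Per) :
    IsPositiveFlow (fun t => (F t).canon) (frontier f.Per) where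
  apply_apply s t := HomeoZR.canon_canon_eq_of_eq (hF.1 s t) (z := z) <| by
    simp only [HomeoZR.canon_eq_self_of_mem_fixS (hF.mem_fixS_of_mem_frontier hz _)]
  strictMono t := (F t).canon_strictMono
  continuous t := (F t).continuous_canon
  apply_of_mem t _ hx := HomeoZR.canon_eq_self_of_mem_fixS (hF.mem_fixS_of_mem_frontier hx t)
  lt_apply := hF.2.2.2

end PosFamily

theorem continuous_delta_left (F : ℝ → HomeoZR) (g : HomeoZR) (t : ℝ) :
    Continuous (delta F g · t) :=
  ((((F t).continuous_canon.comp g.continuous_canon).iterate _).sub continuous_id).sub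
    continuous_const

namespace IsPositiveFlow

variable {F : ℝ → HomeoZR} {E : Set ℝ} (hφ : IsPositiveFlow (fun t => (F t).canon) E)
  (g : HomeoZR) (x : ℝ)
include hφ

theorem continuous_delta : Continuous (delta F g x) :=
  ((hφ.continuous_iterate_left g.continuous_canon x _).sub continuous_const).sub continuous_const

theorem monotone_delta : Monotone (delta F g x) := fun _ _ hst =>
  sub_le_sub_right (sub_le_sub_right
    (hφ.iterate_le_iterate g.canon_strictMono.monotone hst _ x) _) _

theorem delta_eq_of_delta_eq {s t : ℝ} (hst : s < t) (heq : delta F g x s = delta F g x t)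
    (r : ℝ) : delta F g x r = delta F g x s := by
  unfold delta at *
  rw [hφ.iterate_eq_of_iterate_eq g.canon_strictMono hst (by linarith) r]

end IsPositiveFlow

theorem Uset_isOpen_time_continuous_general (f g : HomeoZR)
    (F : ℝ → HomeoZR) (hF : PosFamily f F)
    (hconst : ∀ t : ℝ, ∃ m : ℤ, ((F t).comp g).transNum = g.transNum + m) :
    IsOpen (Uset F g) ∧
    ∃ T : ℝ → ℝ, (∀ x ∈ Uset F g, delta F g x (T x) = 0) ∧
      ContinuousOn T (Uset F g) := by
  rcases (frontier f.Per).eq_empty_or_nonempty with hE | ⟨z, hz⟩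
  · obtain ⟨t, ht⟩ := hF.isFlow.exists_transNum_comp_ne (fun t ht => (hF.2.2.1 t ht).trans hE) g
    obtain ⟨m, hm⟩ := hconst t
    exact absurd hm (ht m)
  · have hφ := hF.isPositiveFlow hz
    exact isOpen_and_continuousOn_unique_zero (continuous_delta_left F g) (hφ.continuous_delta g)
      (hφ.monotone_delta g) (hφ.delta_eq_of_delta_eq g)

/-- Lemma 2.5 (3). `U(f,g)` is open and the time map
`T : U(f,g) → ℝ` is continuous. -/
theorem Uset_isOpen_time_continuous (f g : HomeoZR)
    (hf : RatRot f) (hg : RatRot g)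
    (F : ℝ → HomeoZR) (hF : PosFamily f F)
    (hconst : ∀ t : ℝ, ∃ m : ℤ, ((F t).comp g).transNum = g.transNum + m) :
    IsOpen (Uset F g) ∧
    ∃ T : ℝ → ℝ, (∀ x ∈ Uset F g, delta F g x (T x) = 0) ∧
      ContinuousOn T (Uset F g) :=
  Uset_isOpen_time_continuous_general f g F hF hconst
end
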